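/- arXiv:1601.03437 — 5 statements merged into one kernel-verified Lean document; each statement's English description precedes it below -/
import Mathlib

section
/- Let X be a complete metric space and let φ : X → (0,∞) be a continuous, strictly positive function. Then for every point x₀ ∈ X, every constant C > 1 and all constants A, α > 0, there exists a point x ∈ X such that φ(x) ≥ φ(x₀) and such that φ(y) ≤ C·φ(x) for every y ∈ X with dist(y, x) ≤ A·φ(x)^(−α). -/
/-- **Quasi-maximum lemma.** In a complete metric space `X`, given a continuous,
strictly positive function `φ : X → ℝ`, for every `x₀ ∈ X`, every `C > 1` and all
`A, α > 0`, there exists `x ∈ X` with `φ x ≥ φ x₀` such that `φ y ≤ C * φ x` for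
every `y` in the ball of radius `A * φ x ^ (-α)` about `x`. -/
theorem stmt_0 {X : Type*} [MetricSpace X] [CompleteSpace X]
    (φ : X → ℝ) (hφ_cont : Continuous φ) (hφ_pos : ∀ x, 0 < φ x)
    (x₀ : X) (C A α : ℝ) (hC : 1 < C) (hA : 0 < A) (hα : 0 < α) :
    ∃ x : X, φ x₀ ≤ φ x ∧
      ∀ y : X, dist y x ≤ A * φ x ^ (-α) → φ y ≤ C * φ x := by
  by_contra hcon
  push_neg at hcon
  have hC0 : (0:ℝ) < C := lt_trans one_pos hC
  -- choice function
  choose f hf1 hf2 using hcon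
  let step : {x : X // φ x₀ ≤ φ x} → {x : X // φ x₀ ≤ φ x} := fun p =>
    ⟨f p.1 p.2, le_trans p.2 (le_of_lt (lt_of_le_of_lt
      (le_mul_of_one_le_left (hφ_pos p.1).le hC.le) (hf2 p.1 p.2)))⟩
  let u : ℕ → {x : X // φ x₀ ≤ φ x} := fun n => step^[n] ⟨x₀, le_rfl⟩
  have husucc : ∀ n, u (n+1) = step (u n) := fun n =>
    Function.iterate_succ_apply' step n _
  have hd : ∀ n, dist ((u (n+1)).1) ((u n).1) ≤ A * φ (u n).1 ^ (-α) := by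
    intro n; rw [husucc n]; exact hf1 (u n).1 (u n).2
  have hg : ∀ n, C * φ (u n).1 < φ (u (n+1)).1 := by
    intro n; rw [husucc n]; exact hf2 (u n).1 (u n).2
  have hgrow : ∀ n, φ x₀ * C ^ n ≤ φ (u n).1 := by
    intro n
    induction n with
    | zero => simp [u]
    | succ n ih =>
      have : φ x₀ * C ^ (n+1) = C * (φ x₀ * C ^ n) := by ring
      rw [this]
      calc C * (φ x₀ * C ^ n) ≤ C * φ (u n).1 := by
            exact mul_le_mul_of_nonneg_left ih hC0.le
        _ ≤ φ (u (n+1)).1 := (hg n).le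
  have hx0 : 0 < φ x₀ := hφ_pos x₀
  -- geometric bound on the radii
  set r : ℝ := C ^ (-α) with hr
  have hr0 : 0 < r := Real.rpow_pos_of_pos hC0 _
  have hr1 : r < 1 := Real.rpow_lt_one_of_one_lt_of_neg hC (neg_neg_of_pos hα)
  have hrad : ∀ n, φ (u n).1 ^ (-α) ≤ φ x₀ ^ (-α) * r ^ n := by
    intro n
    have h1 : (0:ℝ) < φ x₀ * C ^ n := mul_pos hx0 (pow_pos hC0 n)
    have h2 : (φ (u n).1) ^ (-α) ≤ (φ x₀ * C ^ n) ^ (-α) := by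
      rw [Real.rpow_neg (hφ_pos _).le, Real.rpow_neg h1.le]
      apply inv_anti₀ (Real.rpow_pos_of_pos h1 _)
      exact Real.rpow_le_rpow h1.le (hgrow n) hα.le
    refine h2.trans (le_of_eq ?_)
    rw [Real.mul_rpow hx0.le (pow_pos hC0 n).le]
    congr 1
    rw [← Real.rpow_natCast C n, ← Real.rpow_natCast r n, hr,
      ← Real.rpow_mul hC0.le, ← Real.rpow_mul hC0.le]
    ring_nf
  -- Cauchy sequence
  have hcauchy : CauchySeq (fun n => (u n).1) := by
    apply cauchySeq_of_le_geometric r (A * φ x₀ ^ (-α)) hr1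
    intro n
    rw [dist_comm]
    calc dist ((u (n+1)).1) ((u n).1) ≤ A * φ (u n).1 ^ (-α) := hd n
      _ ≤ A * (φ x₀ ^ (-α) * r ^ n) := by
          exact mul_le_mul_of_nonneg_left (hrad n) hA.le
      _ = A * φ x₀ ^ (-α) * r ^ n := by ring
  obtain ⟨x, hx⟩ := cauchySeq_tendsto_of_complete hcauchy
  have hto : Filter.Tendsto (fun n => φ (u n).1) Filter.atTop (nhds (φ x)) :=
    (hφ_cont.tendsto x).comp hx
  have hat : Filter.Tendsto (fun n => φ (u n).1) Filter.atTop Filter.atTop := by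
    apply Filter.tendsto_atTop_mono hgrow
    exact (tendsto_pow_atTop_atTop_of_one_lt hC).const_mul_atTop hx0
  exact not_tendsto_atTop_of_tendsto_nhds hto hat
end

section
/- Let E be a finite-dimensional real inner product space, let f : E → ℝ be continuously differentiable, and let γ : ℝ → E be a complete gradient flow of f whose image is bounded. Then the Ω-limit set Ω(γ) := ⋂_{T ∈ ℝ} closure{γ(s) : s ≥ T} is nonempty, compact and connected, and every point p ∈ Ω(γ) is a critical point of f, i.e. ∇f(p) = 0. -/
/-!
Along the flow `f ∘ γ` is nonincreasing with derivative `-‖∇f(γ t)‖²`, and it is bounded below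
because `γ` stays in a compact set; hence `f ∘ γ` converges and loses less and less energy over
time intervals of fixed length. If some `p ∈ Ω(γ)` had `∇f p ≠ 0`, then `‖∇f‖ ≥ c > 0` on a ball
around `p`; since `γ` has bounded speed, each of the arbitrarily late visits of `γ` near `p` keeps
it in that ball for a fixed time `τ`, costing at least `c² τ` of energy, a contradiction.
Nonemptiness, compactness and connectedness hold for any decreasing family of nonempty compact
connected sets, such as the closures of the tails `γ '' [T, ∞)`.
-/

open Set Filter Topology

theorem IsPreconnected.iInter_of_directed_isCompact {X ι : Type*} [TopologicalSpace X]
    [T2Space X] [Nonempty ι] {K : ι → Set X} (hd : Directed (· ⊇ ·) K)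
    (hc : ∀ i, IsCompact (K i)) (hconn : ∀ i, IsPreconnected (K i)) :
    IsPreconnected (⋂ i, K i) := by
  have hΩ : IsClosed (⋂ i, K i) := isClosed_iInter fun i => (hc i).isClosed
  have hΩc : IsCompact (⋂ i, K i) :=
    (hc (Classical.arbitrary ι)).of_isClosed_subset hΩ (iInter_subset _ _)
  rw [isPreconnected_iff_subset_of_fully_disjoint_closed hΩ]
  intro u v hu hv hΩuv huv
  obtain ⟨U, V, hU, hV, huU, hvV, hUV⟩ :=
    SeparatedNhds.of_isCompact_isCompact (hΩc.inter_right hu) (hΩc.inter_right hv)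
      (huv.mono inter_subset_right inter_subset_right)
  obtain ⟨i, hi⟩ : ∃ i, K i ⊆ U ∪ V := by
    refine exists_subset_nhds_of_isCompact hd hc fun x hx => (hU.union hV).mem_nhds ?_
    rcases hΩuv hx with h | h
    exacts [Or.inl (huU ⟨hx, h⟩), Or.inr (hvV ⟨hx, h⟩)]
  have hΩi : (⋂ j, K j) ⊆ K i := iInter_subset _ i
  rcases (hconn i).subset_or_subset hU hV hUV hi with hiU | hiV
  · refine Or.inl fun x hx => (hΩuv hx).resolve_right fun hxv => ?_
    exact hUV.ne_of_mem (hiU (hΩi hx)) (hvV ⟨hx, hxv⟩) rfl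
  · refine Or.inr fun x hx => (hΩuv hx).resolve_left fun hxu => ?_
    exact hUV.ne_of_mem (huU ⟨hx, hxu⟩) (hiV (hΩi hx)) rfl

theorem isCompact_isConnected_iInter_closure_image_Ici {X : Type*} [TopologicalSpace X]
    [T2Space X] {γ : ℝ → X} (hγ : Continuous γ) (hK : ∀ T, IsCompact (closure (γ '' Ici T))) :
    IsCompact (⋂ T, closure (γ '' Ici T)) ∧ IsConnected (⋂ T, closure (γ '' Ici T)) := by
  have hdir : Directed (· ⊇ ·) fun T => closure (γ '' Ici T) := fun a b =>
    ⟨max a b, closure_mono (image_mono (Ici_subset_Ici.2 (le_max_left a b))),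
      closure_mono (image_mono (Ici_subset_Ici.2 (le_max_right a b)))⟩
  refine ⟨(hK 0).of_isClosed_subset (isClosed_iInter fun T => isClosed_closure)
    (iInter_subset _ 0), ?_, ?_⟩
  · exact IsCompact.nonempty_iInter_of_directed_nonempty_isCompact_isClosed _ hdir
      (fun T => ⟨γ T, subset_closure ⟨T, self_mem_Ici, rfl⟩⟩) hK fun T => isClosed_closure
  · exact IsPreconnected.iInter_of_directed_isCompact hdir hK
      fun T => (isPreconnected_Ici.image γ hγ.continuousOn).closure

theorem Antitone.tendsto_sub_comp_add_const {g : ℝ → ℝ} (hg : Antitone g)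
    (hbdd : BddBelow (range g)) (τ : ℝ) :
    Tendsto (fun t => g t - g (t + τ)) atTop (𝓝 0) := by
  have hlim := tendsto_atTop_ciInf hg hbdd
  simpa using hlim.sub (hlim.comp (tendsto_atTop_add_const_right _ τ tendsto_id))

section GradientFlow

variable {E : Type*} [NormedAddCommGroup E] [InnerProductSpace ℝ E] [CompleteSpace E]
  {f : E → ℝ} {γ : ℝ → E}

theorem hasDerivAt_comp_of_hasDerivAt_neg_gradient {t : ℝ} (hf : DifferentiableAt ℝ f (γ t))
    (hγ : HasDerivAt γ (-(gradient f (γ t))) t) :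
    HasDerivAt (f ∘ γ) (-‖gradient f (γ t)‖ ^ 2) t := by
  have hfγ := (hasGradientAt_iff_hasFDerivAt.1 hf.hasGradientAt).comp_hasDerivAt t hγ
  refine hfγ.congr_deriv ?_
  rw [InnerProductSpace.toDual_apply_apply, inner_neg_right, real_inner_self_eq_norm_sq]

theorem antitone_comp_of_gradientFlow (hf : Differentiable ℝ f)
    (hγ : ∀ t, HasDerivAt γ (-(gradient f (γ t))) t) : Antitone (f ∘ γ) := by
  refine antitone_of_deriv_nonpos
    (fun t => (hasDerivAt_comp_of_hasDerivAt_neg_gradient (hf _) (hγ t)).differentiableAt)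
    fun t => ?_
  rw [(hasDerivAt_comp_of_hasDerivAt_neg_gradient (hf _) (hγ t)).deriv]
  exact neg_nonpos.2 (sq_nonneg _)

theorem comp_le_sub_of_le_norm_gradient (hf : Differentiable ℝ f)
    (hγ : ∀ t, HasDerivAt γ (-(gradient f (γ t))) t) {a b c : ℝ} (hab : a ≤ b)
    (hc : ∀ s ∈ Icc a b, c ≤ ‖gradient f (γ s)‖) (hc0 : 0 ≤ c) :
    f (γ b) ≤ f (γ a) - c ^ 2 * (b - a) := by
  have hderiv t := hasDerivAt_comp_of_hasDerivAt_neg_gradient (hf (γ t)) (hγ t)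
  have hdiff : Differentiable ℝ (f ∘ γ) := fun t => (hderiv t).differentiableAt
  have hdrop := (convex_Icc a b).image_sub_le_mul_sub_of_deriv_le hdiff.continuous.continuousOn
    hdiff.differentiableOn (C := -c ^ 2) (fun s hs => ?_) a (left_mem_Icc.2 hab) b
    (right_mem_Icc.2 hab) hab
  · simp only [Function.comp_apply] at hdrop
    linarith
  · rw [(hderiv s).deriv, neg_le_neg_iff]
    exact pow_le_pow_left₀ hc0 (hc s (interior_subset hs)) 2

theorem norm_sub_le_of_gradientFlow (hγ : ∀ t, HasDerivAt γ (-(gradient f (γ t))) t) {M : ℝ}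
    (hM : ∀ t, ‖gradient f (γ t)‖ ≤ M) {a b : ℝ} (hab : a ≤ b) :
    ‖γ b - γ a‖ ≤ M * (b - a) :=
  norm_image_sub_le_of_norm_deriv_le_segment' (fun t _ => (hγ t).hasDerivWithinAt)
    (fun t _ => (norm_neg _).trans_le (hM t)) b (right_mem_Icc.2 hab)

theorem gradient_eq_zero_of_mapClusterPt (hf : Differentiable ℝ f)
    (hγ : ∀ t, HasDerivAt γ (-(gradient f (γ t))) t) {M : ℝ}
    (hM : ∀ t, ‖gradient f (γ t)‖ ≤ M) (hbdd : BddBelow (range (f ∘ γ))) {p : E}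
    (hgrad : ContinuousAt (gradient f) p) (hp : MapClusterPt p atTop γ) :
    gradient f p = 0 := by
  by_contra h0
  set c := ‖gradient f p‖ / 2
  have hc : 0 < c := half_pos (norm_pos_iff.2 h0)
  obtain ⟨r, hr, hball⟩ : ∃ r > 0, ∀ x ∈ Metric.ball p r, c ≤ ‖gradient f x‖ := by
    have hcp : c < ‖gradient f p‖ := half_lt_self (norm_pos_iff.2 h0)
    obtain ⟨r, hr, hball⟩ := Metric.mem_nhds_iff.1 (hgrad.norm.eventually (lt_mem_nhds hcp))
    exact ⟨r, hr, fun x hx => (hball hx).le⟩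
  obtain ⟨τ, hτ, hMτ⟩ := exists_pos_mul_lt (half_pos hr) M
  have hdrop : ∀ t, γ t ∈ Metric.ball p (r / 2) → f (γ (t + τ)) ≤ f (γ t) - c ^ 2 * τ := by
    intro t ht
    have hstay : ∀ s ∈ Icc t (t + τ), c ≤ ‖gradient f (γ s)‖ := by
      intro s hs
      refine hball _ ?_
      have hmove : ‖γ s - γ t‖ ≤ M * (s - t) := norm_sub_le_of_gradientFlow hγ hM hs.1
      have hM0 : 0 ≤ M := (norm_nonneg _).trans (hM 0)
      have : M * (s - t) ≤ M * τ := mul_le_mul_of_nonneg_left (by linarith [hs.2]) hM0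
      rw [Metric.mem_ball, dist_eq_norm] at ht ⊢
      calc ‖γ s - p‖ ≤ ‖γ s - γ t‖ + ‖γ t - p‖ := norm_sub_le_norm_sub_add_norm_sub _ _ _
        _ < r := by linarith
    simpa using comp_le_sub_of_le_norm_gradient hf hγ (by linarith) hstay hc.le
  have hsmall : ∀ᶠ t in atTop, f (γ t) - f (γ (t + τ)) < c ^ 2 * τ :=
    ((antitone_comp_of_gradientFlow hf hγ).tendsto_sub_comp_add_const hbdd τ).eventually
      (gt_mem_nhds (by positivity))
  obtain ⟨t, hvisit, hlt⟩ := ((mapClusterPt_iff_frequently.1 hp _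
    (Metric.ball_mem_nhds p (half_pos hr))).and_eventually hsmall).exists
  linarith [hdrop t hvisit]

end GradientFlow

/-- Let `E` be a finite-dimensional real inner product space, `f : E → ℝ` be `C¹`,
and `γ : ℝ → E` a complete gradient flow of `f` (i.e. `γ' t = -∇f (γ t)` for all `t`)
with bounded image.  Then the Ω-limit set `⋂ T, closure {γ s | s ≥ T}` is nonempty,
compact and connected, and every one of its points is a critical point of `f`. -/
theorem stmt_7 {E : Type*} [NormedAddCommGroup E] [InnerProductSpace ℝ E]
    [FiniteDimensional ℝ E]
    (f : E → ℝ) (hf : ContDiff ℝ 1 f)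
    (γ : ℝ → E) (hγ : ∀ t : ℝ, HasDerivAt γ (-(gradient f (γ t))) t)
    (hbdd : Bornology.IsBounded (Set.range γ)) :
    (⋂ T : ℝ, closure (γ '' Set.Ici T)).Nonempty ∧
    IsCompact (⋂ T : ℝ, closure (γ '' Set.Ici T)) ∧
    IsConnected (⋂ T : ℝ, closure (γ '' Set.Ici T)) ∧
    ∀ p ∈ ⋂ T : ℝ, closure (γ '' Set.Ici T), gradient f p = 0 := by
  have hγc : Continuous γ := continuous_iff_continuousAt.2 fun t => (hγ t).continuousAt
  obtain ⟨hcpt, hconn⟩ := isCompact_isConnected_iInter_closure_image_Ici hγc fun T =>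
    (hbdd.subset (image_subset_range _ _)).isCompact_closure
  refine ⟨hconn.nonempty, hcpt, hconn, fun p hp => ?_⟩
  have hgrad : Continuous (gradient f) :=
    (InnerProductSpace.toDual ℝ E).symm.continuous.comp (hf.continuous_fderiv one_ne_zero)
  have hrange : IsCompact (closure (range γ)) := hbdd.isCompact_closure
  obtain ⟨M, hM⟩ := hrange.exists_bound_of_continuousOn hgrad.continuousOn
  have hbelow : BddBelow (range (f ∘ γ)) := by
    rw [range_comp]
    exact (hrange.bddBelow_image hf.continuous.continuousOn).mono (image_mono subset_closure)
  exact gradient_eq_zero_of_mapClusterPt (hf.differentiable one_ne_zero) hγ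
    (fun t => hM _ (subset_closure (mem_range_self t))) hbelow hgrad.continuousAt
    (mapClusterPt_atTop_iff_forall_mem_closure.2 (mem_iInter.1 hp))
end

section
/- Let E be a finite-dimensional real inner product space, let f : E → ℝ be continuously differentiable, and suppose that every critical point of f is isolated in the set of critical points of f. Then for every complete gradient flow γ : ℝ → E of f whose image is bounded, there exist critical points p₋ and p₊ of f such that γ(t) → p₋ as t → −∞ and γ(t) → p₊ as t → +∞. -/
/-!
Along the flow, `f ∘ γ` has derivative `-‖∇f(γ t)‖²`; it is bounded below because `γ` stays in a
compact set, so it converges. Near a non-critical point the gradient is bounded away from zero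
and `γ` moves at bounded speed, so each return of `γ` to such a point would cost a fixed amount
of energy: every ω-limit point of `γ` is critical. The ω-limit set of a curve with compact
closure is nonempty and connected, and a connected subset of the discrete critical set is a
single point, to which `γ` converges. Reversing time, `t ↦ γ (-t)` is a gradient flow of `-f`,
which gives the limit at `-∞`.
-/

open Filter Topology Set Metric
open scoped Gradient

section ClusterPoints

variable {X : Type*} [TopologicalSpace X] {γ : ℝ → X}

lemma Continuous.eventually_mem_or_eventually_mem_of_disjoint (hγ : Continuous γ)
    {U V : Set X} (hU : IsOpen U) (hV : IsOpen V) (hUV : Disjoint U V)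
    (h : ∀ᶠ t in atTop, γ t ∈ U ∪ V) :
    (∀ᶠ t in atTop, γ t ∈ U) ∨ ∀ᶠ t in atTop, γ t ∈ V := by
  obtain ⟨T, hT⟩ := eventually_atTop.mp h
  have htail : γ '' Ici T ⊆ U ∪ V := by
    rintro _ ⟨t, ht, rfl⟩
    exact hT t ht
  refine ((isPreconnected_Ici.image γ hγ.continuousOn).subset_or_subset hU hV hUV htail).imp
    (fun hsub => ?_) (fun hsub => ?_) <;>
  exact eventually_atTop.mpr ⟨T, fun t ht => hsub (mem_image_of_mem γ ht)⟩

lemma MapClusterPt.notMem_of_eventually_mem {α : Type*} {l : Filter α} {u : α → X} {x : X}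
    (hx : MapClusterPt x l u) {U V : Set X} (hV : IsOpen V) (hUV : Disjoint U V)
    (hU : ∀ᶠ a in l, u a ∈ U) : x ∉ V :=
  (hUV.closure_left hV).notMem_of_mem_left (hx.mem_closure_of_mem _ hU)

variable [T2Space X]

lemma isPreconnected_setOf_mapClusterPt (hγ : Continuous γ) {K : Set X} (hK : IsCompact K)
    (hmem : ∀ᶠ t in atTop, γ t ∈ K) : IsPreconnected {x | MapClusterPt x atTop γ} := by
  set Ω := {x | MapClusterPt x atTop γ}
  have hΩ : IsCompact Ω := hK.of_isClosed_subset isClosed_setOfPred_clusterPt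
    fun x hx => hK.isClosed.closure_subset (hx.mem_closure_of_mem _ hmem)
  rw [isPreconnected_iff_subset_of_disjoint_closed]
  intro u v hu hv hΩuv huv
  obtain ⟨U, V, hUo, hVo, huU, hvV, hUV⟩ :=
    SeparatedNhds.of_isCompact_isCompact (hΩ.inter_right hu) (hΩ.inter_right hv) <| by
      rw [disjoint_iff_inter_eq_empty, ← huv]
      ext; simp only [mem_inter_iff]; tauto
  have hΩUV : Ω ⊆ U ∪ V := fun x hx =>
    (hΩuv hx).imp (fun hxu => huU ⟨hx, hxu⟩) (fun hxv => hvV ⟨hx, hxv⟩)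
  have htend : ∀ᶠ t in atTop, γ t ∈ U ∪ V :=
    hK.tendsto_nhdsSet_of_mapClusterPt hmem (fun x _ hx => hx)
      ((hUo.union hVo).mem_nhdsSet.mpr hΩUV)
  refine (hγ.eventually_mem_or_eventually_mem_of_disjoint hUo hVo hUV htend).imp
    (fun hU x hx => ?_) (fun hV x hx => ?_)
  · exact (hΩuv hx).resolve_right fun hxv =>
      hx.notMem_of_eventually_mem hVo hUV hU (hvV ⟨hx, hxv⟩)
  · exact (hΩuv hx).resolve_left fun hxu =>
      hx.notMem_of_eventually_mem hUo hUV.symm hV (huU ⟨hx, hxu⟩)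

lemma Continuous.exists_tendsto_atTop_of_mapClusterPt_mem (hγ : Continuous γ) {K : Set X}
    (hK : IsCompact K) (hmem : ∀ᶠ t in atTop, γ t ∈ K) {S : Set X} (hS : IsDiscrete S)
    (hΩS : ∀ x, MapClusterPt x atTop γ → x ∈ S) : ∃ p ∈ S, Tendsto γ atTop (𝓝 p) := by
  obtain ⟨p, -, hp⟩ := hK.exists_mapClusterPt (le_principal_iff.mpr hmem)
  have hΩ : {x | MapClusterPt x atTop γ}.Subsingleton :=
    (isPreconnected_setOf_mapClusterPt hγ hK hmem).isDiscrete_iff_subsingleton.mp (hS.mono hΩS)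
  exact ⟨p, hΩS p hp, hK.tendsto_nhds_of_unique_mapClusterPt hmem fun x _ hx => hΩ hx hp⟩

end ClusterPoints

lemma Metric.isDiscrete_of_forall_exists_dist_lt {α : Type*} [PseudoMetricSpace α] {s : Set α}
    (h : ∀ p ∈ s, ∃ ε > 0, ∀ q ∈ s, dist q p < ε → q = p) : IsDiscrete s := by
  refine isDiscrete_iff_forall_mem_exists_isOpen.mpr fun p hp => ?_
  obtain ⟨ε, hε, hiso⟩ := h p hp
  refine ⟨ball p ε, isOpen_ball, Subset.antisymm (fun q hq => hiso q hq.2 hq.1) ?_⟩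
  rintro _ rfl
  exact ⟨mem_ball_self hε, hp⟩

section GradientFlow

variable {E : Type*} [NormedAddCommGroup E] [InnerProductSpace ℝ E] [CompleteSpace E]
  {f : E → ℝ} {γ : ℝ → E}

lemma gradient_fun_neg (f : E → ℝ) (x : E) : ∇ (fun y => -f y) x = -∇ f x := by
  simp only [gradient, fderiv_fun_neg, map_neg]

variable (f γ) in
def IsGradientFlow : Prop := ∀ t, HasDerivAt γ (-∇ f (γ t)) t

namespace IsGradientFlow

lemma continuous (hγ : IsGradientFlow f γ) : Continuous γ :=
  continuous_iff_continuousAt.mpr fun t => (hγ t).continuousAt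

lemma comp_neg (hγ : IsGradientFlow f γ) :
    IsGradientFlow (fun x => -f x) (fun t => γ (-t)) := by
  intro t
  simpa [Function.comp_def, gradient_fun_neg] using (hγ (-t)).scomp t (hasDerivAt_neg t)

lemma hasDerivAt_comp (hγ : IsGradientFlow f γ) (hf : Differentiable ℝ f) (t : ℝ) :
    HasDerivAt (f ∘ γ) (-‖∇ f (γ t)‖ ^ 2) t := by
  have := (hf (γ t)).hasGradientAt.hasFDerivAt.comp_hasDerivAt t (hγ t)
  rwa [map_neg, InnerProductSpace.toDual_apply_apply, real_inner_self_eq_norm_sq] at this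

lemma antitone_comp (hγ : IsGradientFlow f γ) (hf : Differentiable ℝ f) : Antitone (f ∘ γ) :=
  antitone_of_hasDerivAt_nonpos (hγ.hasDerivAt_comp hf) fun t =>
    neg_nonpos.mpr (sq_nonneg ‖∇ f (γ t)‖)

lemma comp_add_le_sub_sq_mul (hγ : IsGradientFlow f γ) (hf : Differentiable ℝ f) {a τ : ℝ}
    (t : ℝ) (hτ : 0 ≤ τ) (ha : 0 ≤ a) (hgrad : ∀ s ∈ Icc t (t + τ), a ≤ ‖∇ f (γ s)‖) :
    f (γ (t + τ)) ≤ f (γ t) - a ^ 2 * τ := by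
  have hderiv : ∀ s ∈ interior (Icc t (t + τ)), deriv (f ∘ γ) s ≤ -a ^ 2 := fun s hs => by
    rw [(hγ.hasDerivAt_comp hf s).deriv, neg_le_neg_iff]
    exact pow_le_pow_left₀ ha (hgrad s (interior_subset hs)) 2
  have := (convex_Icc t (t + τ)).image_sub_le_mul_sub_of_deriv_le
    (fun s _ => (hγ.hasDerivAt_comp hf s).continuousAt.continuousWithinAt)
    (fun s _ => (hγ.hasDerivAt_comp hf s).differentiableAt.differentiableWithinAt) hderiv
    t (left_mem_Icc.mpr (by linarith)) (t + τ) (right_mem_Icc.mpr (by linarith)) (by linarith)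
  simp only [Function.comp_apply] at this
  linarith

lemma dist_le_mul (hγ : IsGradientFlow f γ) {M : ℝ} (hM : ∀ t, ‖∇ f (γ t)‖ ≤ M) (s t : ℝ) :
    dist (γ s) (γ t) ≤ M * |s - t| := by
  simpa [dist_eq_norm, Real.norm_eq_abs] using
    convex_univ.norm_image_sub_le_of_norm_hasDerivWithin_le (fun u _ => (hγ u).hasDerivWithinAt)
      (fun u _ => by simpa using hM u) (mem_univ t) (mem_univ s)

lemma gradient_eq_zero_of_mapClusterPt (hγ : IsGradientFlow f γ) (hf : Differentiable ℝ f)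
    (hgrad : Continuous (∇ f)) {M : ℝ} (hM : ∀ t, ‖∇ f (γ t)‖ ≤ M)
    (hbelow : BddBelow (range (f ∘ γ))) {q : E} (hq : MapClusterPt q atTop γ) :
    ∇ f q = 0 := by
  by_contra hq0
  have hq0' : 0 < ‖∇ f q‖ := norm_pos_iff.mpr hq0
  set a := ‖∇ f q‖ / 2
  have ha : 0 < a := half_pos hq0'
  obtain ⟨δ, hδ, hball⟩ : ∃ δ > 0, ∀ x, dist x q < δ → a < ‖∇ f x‖ :=
    eventually_nhds_iff.mp <| hgrad.norm.continuousAt.eventually (lt_mem_nhds (half_lt_self hq0'))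
  obtain ⟨τ, hτ, hMτ⟩ := exists_pos_mul_lt (half_pos hδ) M
  have hM0 : 0 ≤ M := (norm_nonneg _).trans (hM 0)
  have hdrop : ∀ t, dist (γ t) q < δ / 2 → f (γ (t + τ)) ≤ f (γ t) - a ^ 2 * τ := by
    intro t ht
    refine hγ.comp_add_le_sub_sq_mul hf t hτ.le ha.le fun s hs => (hball (γ s) ?_).le
    have hst : |s - t| ≤ τ := abs_le.mpr ⟨by linarith [hs.1], by linarith [hs.2]⟩
    calc dist (γ s) q ≤ dist (γ s) (γ t) + dist (γ t) q := dist_triangle _ _ _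
      _ < M * τ + δ / 2 := add_lt_add_of_le_of_lt
          ((hγ.dist_le_mul hM s t).trans (mul_le_mul_of_nonneg_left hst hM0)) ht
      _ < δ := by linarith
  have hlim := tendsto_atTop_ciInf (hγ.antitone_comp hf) hbelow
  have hgap : ∀ᶠ t in atTop, f (γ t) - f (γ (t + τ)) < a ^ 2 * τ := by
    have := hlim.sub (hlim.comp (tendsto_atTop_add_const_right _ τ tendsto_id))
    rw [sub_self] at this
    exact this.eventually (gt_mem_nhds (by positivity))
  obtain ⟨t, hvisit, hsmall⟩ :=
    ((mapClusterPt_iff_frequently.mp hq _ (ball_mem_nhds q (half_pos hδ))).and_eventually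
      hgap).exists
  linarith [hdrop t hvisit]

end IsGradientFlow

end GradientFlow

lemma IsGradientFlow.exists_tendsto_atTop {E : Type*} [NormedAddCommGroup E]
    [InnerProductSpace ℝ E] [ProperSpace E] {f : E → ℝ} {γ : ℝ → E} (hγ : IsGradientFlow f γ)
    (hf : ContDiff ℝ 1 f) (hcrit : IsDiscrete {p | ∇ f p = 0})
    (hbdd : Bornology.IsBounded (range γ)) : ∃ p, ∇ f p = 0 ∧ Tendsto γ atTop (𝓝 p) := by
  have hdiff : Differentiable ℝ f := hf.differentiable one_ne_zero
  have hgrad : Continuous (∇ f) :=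
    (InnerProductSpace.toDual ℝ E).symm.continuous.comp (hf.continuous_fderiv one_ne_zero)
  have hK : IsCompact (closure (range γ)) := hbdd.isCompact_closure
  have hγK : ∀ t, γ t ∈ closure (range γ) := fun t => subset_closure (mem_range_self t)
  obtain ⟨M, hM⟩ := hK.exists_bound_of_continuousOn hgrad.continuousOn
  have hbelow : BddBelow (range (f ∘ γ)) :=
    (hK.bddBelow_image hf.continuous.continuousOn).mono <| by
      rintro _ ⟨t, rfl⟩
      exact mem_image_of_mem f (hγK t)
  exact hγ.continuous.exists_tendsto_atTop_of_mapClusterPt_mem hK (.of_forall hγK) hcrit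
    fun q hq => hγ.gradient_eq_zero_of_mapClusterPt hdiff hgrad (fun t => hM _ (hγK t)) hbelow hq

/-- Let `E` be a finite-dimensional real inner product space and `f : E → ℝ` be `C¹`,
with every critical point of `f` isolated in the set of critical points.  Then every
complete gradient flow `γ : ℝ → E` of `f` with bounded image has well-defined
end-points: there exist critical points `p₋` and `p₊` of `f` with `γ t → p₋` as
`t → -∞` and `γ t → p₊` as `t → +∞`. -/
theorem stmt_8 {E : Type*} [NormedAddCommGroup E] [InnerProductSpace ℝ E]
    [FiniteDimensional ℝ E]
    (f : E → ℝ) (hf : ContDiff ℝ 1 f)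
    (hiso : ∀ p : E, gradient f p = 0 →
      ∃ ε > (0 : ℝ), ∀ q : E, gradient f q = 0 → dist q p < ε → q = p)
    (γ : ℝ → E) (hγ : ∀ t : ℝ, HasDerivAt γ (-(gradient f (γ t))) t)
    (hbdd : Bornology.IsBounded (Set.range γ)) :
    ∃ pminus pplus : E, gradient f pminus = 0 ∧ gradient f pplus = 0 ∧
      Filter.Tendsto γ Filter.atBot (nhds pminus) ∧
      Filter.Tendsto γ Filter.atTop (nhds pplus) := by
  have hflow : IsGradientFlow f γ := hγ
  have hcrit : IsDiscrete {p | ∇ f p = 0} := isDiscrete_of_forall_exists_dist_lt hiso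
  obtain ⟨pplus, hplus, hγplus⟩ := hflow.exists_tendsto_atTop hf hcrit hbdd
  obtain ⟨pminus, hminus, hγminus⟩ := hflow.comp_neg.exists_tendsto_atTop hf.neg
    (by simpa only [gradient_fun_neg, neg_eq_zero] using hcrit)
    (hbdd.subset (range_comp_subset_range (fun t : ℝ => -t) γ))
  refine ⟨pminus, pplus, by simpa only [gradient_fun_neg, neg_eq_zero] using hminus, hplus, ?_,
    hγplus⟩
  simpa only [Function.comp_def, neg_neg] using hγminus.comp tendsto_neg_atBot_atTop
end

section
/- Let E be a finite-dimensional real inner product space, let f : E → ℝ be twice continuously differentiable, and let γ : ℝ → E be a complete gradient flow of f whose image is bounded and which is not constant. Then the function t ↦ f(γ(t)) is strictly decreasing, and the set {f(γ(t)) : t ∈ ℝ} is a bounded open interval. -/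
/-!
Along a gradient flow `(f ∘ γ)' = -‖∇f(γ)‖²`. If this vanished at some time, the constant curve
through that point would be a second solution of `γ' = -∇f(γ)` with the same value there; since
`∇f` is `C¹`, hence locally Lipschitz, ODE uniqueness would force `γ` to be constant. So
`f ∘ γ` is strictly decreasing; being continuous with bounded range, its range is a bounded
open interval.
-/

open Set InnerProductSpace
open scoped Gradient

theorem ODE_solution_eq_of_apply_eq_zero {E : Type*} [NormedAddCommGroup E] [NormedSpace ℝ E]
    {v : E → E} (hv : LocallyLipschitz v) {γ : ℝ → E} (hγ : ∀ t, HasDerivAt γ (v (γ t)) t)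
    {t₀ : ℝ} (h₀ : v (γ t₀) = 0) (t : ℝ) : γ t = γ t₀ := by
  set a := min t t₀ - 1
  set b := max t t₀ + 1
  have ht : t ∈ Ioo a b := ⟨by grind, by grind⟩
  have ht₀ : t₀ ∈ Ioo a b := ⟨by grind, by grind⟩
  have hcompact : IsCompact (γ '' Icc a b) :=
    isCompact_Icc.image (continuous_iff_continuousAt.2 fun t => (hγ t).continuousAt)
  obtain ⟨K, hK⟩ := hv.locallyLipschitzOn.exists_lipschitzOnWith_of_compact hcompact
  refine ODE_solution_unique_of_mem_Ioo (v := fun _ => v) (s := fun _ => γ '' Icc a b)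
    (fun _ _ => hK) ht₀ (fun τ hτ => ⟨hγ τ, mem_image_of_mem γ (Ioo_subset_Icc_self hτ)⟩)
    (fun τ _ => ⟨h₀ ▸ hasDerivAt_const τ (γ t₀), mem_image_of_mem γ (Ioo_subset_Icc_self ht₀)⟩)
    rfl ht

section Gradient

variable {E : Type*} [NormedAddCommGroup E] [InnerProductSpace ℝ E] [CompleteSpace E]
  {f : E → ℝ}

theorem ContDiff.gradient {n : WithTop ℕ∞} (hf : ContDiff ℝ (n + 1) f) :
    ContDiff ℝ n (∇ f) :=
  (toDual ℝ E).symm.contDiff.comp (hf.fderiv_right le_rfl)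

theorem HasGradientAt.comp_hasDerivAt {f' : E} {γ : ℝ → E} {w : E} (t : ℝ)
    (hf : HasGradientAt f f' (γ t)) (hγ : HasDerivAt γ w t) :
    HasDerivAt (f ∘ γ) ⟪f', w⟫_ℝ t := by
  simpa [toDual_apply_apply] using hf.hasFDerivAt.comp_hasDerivAt t hγ

end Gradient

theorem StrictAnti.exists_range_eq_Ioo {g : ℝ → ℝ} (hg : StrictAnti g) (hc : Continuous g)
    (hb : Bornology.IsBounded (range g)) :
    ∃ a b, a < b ∧ range g = Ioo a b := by
  have hne : (range g).Nonempty := range_nonempty g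
  have hsub : range g ⊆ Ioo (sInf (range g)) (sSup (range g)) := by
    rintro _ ⟨t, rfl⟩
    exact ⟨(csInf_le hb.bddBelow (mem_range_self (t + 1))).trans_lt (hg (lt_add_one t)),
      (hg (sub_one_lt t)).trans_le (le_csSup hb.bddAbove (mem_range_self (t - 1)))⟩
  refine ⟨_, _, nonempty_Ioo.mp (hne.mono hsub), hsub.antisymm fun y hy => ?_⟩
  obtain ⟨_, hz, hzy⟩ := exists_lt_of_csInf_lt hne hy.1
  obtain ⟨_, hw, hyw⟩ := exists_lt_of_lt_csSup hne hy.2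
  exact (isPreconnected_range hc).ordConnected.out hz hw ⟨hzy.le, hyw.le⟩

/-- Let `E` be a finite-dimensional real inner product space, `f : E → ℝ` be `C²`,
and `γ : ℝ → E` a non-constant complete gradient flow of `f` with bounded image.
Then `t ↦ f (γ t)` is strictly decreasing and its set of values
`{f (γ t) | t ∈ ℝ}` is a bounded open interval. -/
theorem stmt_9 {E : Type*} [NormedAddCommGroup E] [InnerProductSpace ℝ E]
    [FiniteDimensional ℝ E]
    (f : E → ℝ) (hf : ContDiff ℝ 2 f)
    (γ : ℝ → E) (hγ : ∀ t : ℝ, HasDerivAt γ (-(gradient f (γ t))) t)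
    (hbdd : Bornology.IsBounded (Set.range γ))
    (hnc : ∃ s t : ℝ, γ s ≠ γ t) :
    StrictAnti (fun t : ℝ => f (γ t)) ∧
    ∃ a b : ℝ, a < b ∧ Set.range (fun t : ℝ => f (γ t)) = Set.Ioo a b := by
  have hgrad_ne : ∀ t, ∇ f (γ t) ≠ 0 := by
    intro t₀ h₀
    obtain ⟨s, t, hst⟩ := hnc
    have hconst := ODE_solution_eq_of_apply_eq_zero (hf.gradient (n := 1)).neg.locallyLipschitz hγ
      (neg_eq_zero.2 h₀)
    exact hst ((hconst s).trans (hconst t).symm)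
  have hderiv (t : ℝ) : HasDerivAt (f ∘ γ) (-‖∇ f (γ t)‖ ^ 2) t := by
    simpa [inner_neg_right, real_inner_self_eq_norm_sq] using
      (hf.differentiable two_ne_zero (γ t)).hasGradientAt.comp_hasDerivAt t (hγ t)
  have hanti : StrictAnti (f ∘ γ) :=
    strictAnti_of_hasDerivAt_neg hderiv fun t =>
      neg_neg_of_pos (pow_pos (norm_pos_iff.2 (hgrad_ne t)) 2)
  have hbdd_values : Bornology.IsBounded (range (f ∘ γ)) := by
    rw [range_comp]
    exact (hbdd.isCompact_closure.image hf.continuous).isBounded.subset (image_mono subset_closure)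
  exact ⟨hanti, hanti.exists_range_eq_Ioo (hf.continuous.comp (continuous_iff_continuousAt.2
    fun t => (hγ t).continuousAt)) hbdd_values⟩
end

section
/- Let E be a finite-dimensional real inner product space and let A : ℝ → End(E) be a continuous map with sup_{t∈ℝ} ‖A(t)‖ < ∞, such that A(t) converges as t → −∞ and as t → +∞ to operators A₋ and A₊ respectively, each of which is self-adjoint and invertible. Then every bounded continuously differentiable function f : ℝ → E satisfying f'(t) + A(t)f(t) = 0 for all t decays exponentially: there exist constants C, δ > 0 such that ‖f(t)‖ ≤ C·e^(−δ|t|) for all t ∈ ℝ. -/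
/-!
Near `+∞` write `A t = B + (A t - B)` with `‖A t - B‖ ≤ m / 4`, where `m > 0` bounds the
eigenvalues of the limit `B` away from `0`. Splitting `‖f‖² = p + q` along the positive and
negative eigenspaces of `B` gives `p' ≤ -2mp + (m/2)‖f‖²` and `q' ≥ 2mq - (m/2)‖f‖²`. Hence
`(q - p)' ≥ m (q - p)`, and since `f` is bounded this forces `q ≤ p`; then `p' ≤ -mp`, so
`‖f‖² ≤ 2p` decays like `e^{-mt}`. The end at `-∞` is the same argument after reversing time.
-/

open scoped RealInnerProductSpace
open Real Filter Finset Set Topology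

theorem monotoneOn_mul_exp_neg_of_mul_le_deriv {u u' : ℝ → ℝ} {m T : ℝ}
    (hu : ∀ t, HasDerivAt u (u' t) t) (h : ∀ t, T ≤ t → m * u t ≤ u' t) :
    MonotoneOn (fun t => u t * exp (-m * t)) (Ici T) := by
  have hderiv : ∀ t, HasDerivAt (fun s => u s * exp (-m * s))
      ((u' t - m * u t) * exp (-m * t)) t := fun t =>
    ((hu t).fun_mul ((hasDerivAt_id' t).const_mul (-m)).exp).congr_deriv (by ring)
  refine monotoneOn_of_deriv_nonneg (convex_Ici T)
    (fun t _ => (hderiv t).continuousAt.continuousWithinAt)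
    (fun t _ => (hderiv t).differentiableAt.differentiableWithinAt) fun t ht => ?_
  rw [interior_Ici] at ht
  rw [(hderiv t).deriv]
  exact mul_nonneg (sub_nonneg.2 (h t ht.le)) (exp_pos _).le

theorem nonpos_of_mul_le_deriv_of_le {u u' : ℝ → ℝ} {m T K : ℝ} (hm : 0 < m)
    (hu : ∀ t, HasDerivAt u (u' t) t) (h : ∀ t, T ≤ t → m * u t ≤ u' t)
    (hK : ∀ t, T ≤ t → u t ≤ K) (t₀ : ℝ) (ht₀ : T ≤ t₀) : u t₀ ≤ 0 := by
  by_contra! hpos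
  have hgrow : Tendsto (fun s => u t₀ * exp (-m * t₀) * exp (m * s)) atTop atTop :=
    (tendsto_exp_atTop.comp (tendsto_id.const_mul_atTop hm)).const_mul_atTop (by positivity)
  obtain ⟨s, hsK, hs⟩ := ((hgrow.eventually_gt_atTop K).and (eventually_ge_atTop t₀)).exists
  have hmono := monotoneOn_mul_exp_neg_of_mul_le_deriv hu h ht₀ (ht₀.trans hs) hs
  have hus : u s * exp (-m * s) * exp (m * s) = u s := by
    rw [mul_assoc, ← exp_add]; simp
  have hlow := mul_le_mul_of_nonneg_right hmono (exp_pos (m * s)).le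
  linarith [hK s (ht₀.trans hs)]

theorem exists_le_mul_exp_of_deriv_le {u u' : ℝ → ℝ} {m T : ℝ}
    (hu : ∀ t, HasDerivAt u (u' t) t) (h : ∀ t, T ≤ t → u' t ≤ -m * u t) :
    ∃ C, ∀ t, T ≤ t → u t ≤ C * exp (-m * t) := by
  have hmono := monotoneOn_mul_exp_neg_of_mul_le_deriv (u := -u) (m := -m)
    (fun t => (hu t).neg) fun t ht => by simp only [Pi.neg_apply]; linarith [h t ht]
  refine ⟨u T * exp (m * T), fun t ht => ?_⟩
  have key : u t * exp (m * t) ≤ u T * exp (m * T) := by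
    simpa using hmono self_mem_Ici ht ht
  calc u t = u t * exp (m * t) * exp (-m * t) := by rw [mul_assoc, ← exp_add]; simp
    _ ≤ u T * exp (m * T) * exp (-m * t) := by gcongr

theorem exists_add_le_mul_exp_of_dichotomy {p q p' q' : ℝ → ℝ} {m T K : ℝ} (hm : 0 < m)
    (hp : ∀ t, HasDerivAt p (p' t) t) (hq : ∀ t, HasDerivAt q (q' t) t)
    (hp0 : ∀ t, T ≤ t → 0 ≤ p t) (hqK : ∀ t, T ≤ t → q t ≤ K)
    (hp' : ∀ t, T ≤ t → p' t ≤ -2 * m * p t + m / 2 * (p t + q t))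
    (hq' : ∀ t, T ≤ t → 2 * m * q t - m / 2 * (p t + q t) ≤ q' t) :
    ∃ C, ∀ t, T ≤ t → p t + q t ≤ C * exp (-m * t) := by
  have hqp : ∀ t, T ≤ t → q t - p t ≤ 0 :=
    nonpos_of_mul_le_deriv_of_le (K := K) hm (fun t => (hq t).sub (hp t))
      (fun t ht => by nlinarith [hp' t ht, hq' t ht, hp0 t ht])
      (fun t ht => by linarith [hqK t ht, hp0 t ht])
  obtain ⟨C, hC⟩ := exists_le_mul_exp_of_deriv_le (m := m) hp
    fun t ht => by nlinarith [hp' t ht, hqp t ht]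
  exact ⟨2 * C, fun t ht => by linarith [hC t ht, hqp t ht]⟩

theorem exists_le_mul_exp_of_le_of_forall_ge {g : ℝ → ℝ} {K C δ T : ℝ} (hδ : 0 ≤ δ)
    (hK : ∀ t, g t ≤ K) (hT : ∀ t, T ≤ t → g t ≤ C * exp (-δ * t)) :
    ∃ C', ∀ t, g t ≤ C' * exp (-δ * t) := by
  refine ⟨max C (max K 0 * exp (δ * T)), fun t => ?_⟩
  rcases le_total T t with ht | ht
  · calc g t ≤ C * exp (-δ * t) := hT t ht
      _ ≤ _ := by gcongr; exact le_max_left _ _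
  · calc g t ≤ max K 0 := (hK t).trans (le_max_left _ _)
      _ ≤ max K 0 * exp (δ * T) * exp (-δ * t) := by
        rw [mul_assoc, ← exp_add]
        exact le_mul_of_one_le_right (le_max_right _ _) (one_le_exp (by nlinarith))
      _ ≤ _ := by gcongr; exact le_max_right _ _

theorem Finite.exists_pos_le_abs {ι : Type*} [Finite ι] {a : ι → ℝ} (ha : ∀ i, a i ≠ 0) :
    ∃ m > 0, ∀ i, m ≤ |a i| := by
  cases isEmpty_or_nonempty ι
  · exact ⟨1, one_pos, fun i => isEmptyElim i⟩
  · obtain ⟨i₀, hi₀⟩ := Finite.exists_min fun i => |a i|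
    exact ⟨|a i₀|, abs_pos.2 (ha i₀), hi₀⟩

section InnerProductSpace

variable {E : Type*} [NormedAddCommGroup E] [InnerProductSpace ℝ E]

theorem LinearMap.IsSymmetric.neg {T : E →ₗ[ℝ] E} (hT : T.IsSymmetric) : (-T).IsSymmetric :=
  fun x y => by simp [hT x y]

theorem Orthonormal.sum_inner_mul_inner_le {ι : Type*} {v : ι → E} (hv : Orthonormal ℝ v)
    (s : Finset ι) (x y : E) : ∑ i ∈ s, ⟪v i, x⟫ * ⟪v i, y⟫ ≤ ‖x‖ * ‖y‖ := by
  have bessel : ∀ z : E, √(∑ i ∈ s, ⟪v i, z⟫ ^ 2) ≤ ‖z‖ := fun z =>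
    (sqrt_le_sqrt (by simpa only [Real.norm_eq_abs, sq_abs] using hv.sum_inner_products_le z)
      ).trans_eq (sqrt_sq (norm_nonneg z))
  calc _ ≤ √(∑ i ∈ s, ⟪v i, x⟫ ^ 2) * √(∑ i ∈ s, ⟪v i, y⟫ ^ 2) := sum_mul_le_sqrt_mul_sqrt s _ _
    _ ≤ ‖x‖ * ‖y‖ := mul_le_mul (bessel x) (bessel y) (sqrt_nonneg _) (norm_nonneg _)

theorem HasDerivAt.sum_inner_sq {ι : Type*} (v : ι → E) (s : Finset ι) {f : ℝ → E} {f' : E}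
    {t : ℝ} (hf : HasDerivAt f f' t) :
    HasDerivAt (fun t => ∑ i ∈ s, ⟪v i, f t⟫ ^ 2) (∑ i ∈ s, 2 * ⟪v i, f t⟫ * ⟪v i, f'⟫) t :=
  HasDerivAt.fun_sum fun i _ => by
    simpa [mul_comm] using ((hasDerivAt_const t (v i)).inner ℝ hf).fun_pow 2

theorem OrthonormalBasis.le_sum_inner_mul_inner_apply {ι : Type*} [Fintype ι]
    (e : OrthonormalBasis ι ℝ E) {A B : E →L[ℝ] E} (hB : (B : E →ₗ[ℝ] E).IsSymmetric)
    {μ : ι → ℝ} (he : ∀ i, B (e i) = μ i • e i) {s : Finset ι} {m : ℝ}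
    (hμ : ∀ i ∈ s, m ≤ μ i) (hA : ‖A - B‖ ≤ m / 4) (x : E) :
    2 * m * ∑ i ∈ s, ⟪e i, x⟫ ^ 2 - m / 2 * ‖x‖ ^ 2 ≤ ∑ i ∈ s, 2 * ⟪e i, x⟫ * ⟪e i, A x⟫ := by
  have hcoord : ∀ i, ⟪e i, A x⟫ = μ i * ⟪e i, x⟫ + ⟪e i, (A - B) x⟫ := fun i => by
    rw [sub_apply, inner_sub_right, ← hB.apply_clm, he, real_inner_smul_left]
    ring
  have hdiag : m * ∑ i ∈ s, ⟪e i, x⟫ ^ 2 ≤ ∑ i ∈ s, μ i * ⟪e i, x⟫ ^ 2 := by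
    rw [mul_sum]
    exact sum_le_sum fun i hi => mul_le_mul_of_nonneg_right (hμ i hi) (sq_nonneg _)
  have hcross : -(m / 4 * ‖x‖ ^ 2) ≤ ∑ i ∈ s, ⟪e i, x⟫ * ⟪e i, (A - B) x⟫ := by
    have hCS := e.orthonormal.sum_inner_mul_inner_le s x (-((A - B) x))
    simp only [inner_neg_right, mul_neg, sum_neg_distrib, norm_neg] at hCS
    have hR : ‖x‖ * ‖(A - B) x‖ ≤ ‖x‖ * (m / 4 * ‖x‖) := mul_le_mul_of_nonneg_left
      (((A - B).le_opNorm x).trans (mul_le_mul_of_nonneg_right hA (norm_nonneg x))) (norm_nonneg x)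
    linarith
  have hsplit : ∑ i ∈ s, 2 * ⟪e i, x⟫ * ⟪e i, A x⟫ =
      2 * ∑ i ∈ s, μ i * ⟪e i, x⟫ ^ 2 + 2 * ∑ i ∈ s, ⟪e i, x⟫ * ⟪e i, (A - B) x⟫ := by
    simp only [hcoord, mul_sum, ← sum_add_distrib]
    exact sum_congr rfl fun i _ => by ring
  linarith

theorem OrthonormalBasis.exists_norm_sq_le_mul_exp {ι : Type*} [Fintype ι] [DecidableEq ι]
    (e : OrthonormalBasis ι ℝ E)
    {B : E →L[ℝ] E} (hB : (B : E →ₗ[ℝ] E).IsSymmetric) {μ : ι → ℝ}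
    (he : ∀ i, B (e i) = μ i • e i) {m : ℝ} (hm : 0 < m) (hμm : ∀ i, m ≤ |μ i|)
    {A : ℝ → E →L[ℝ] E} {T : ℝ} (hT : ∀ t, T ≤ t → ‖A t - B‖ ≤ m / 4)
    {f : ℝ → E} (hf : ∀ t, HasDerivAt f (-(A t (f t))) t) {K : ℝ} (hK : ∀ t, ‖f t‖ ≤ K) :
    ∃ C, ∀ t, T ≤ t → ‖f t‖ ^ 2 ≤ C * exp (-m * t) := by
  -- The two sums over `S` and `Sᶜ` are the squared norms of the components of `f t` in the
  -- positive and negative spectral subspaces of `B`.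
  set S := univ.filter fun i => 0 < μ i
  have hpq : ∀ t, ∑ i ∈ S, ⟪e i, f t⟫ ^ 2 + ∑ i ∈ Sᶜ, ⟪e i, f t⟫ ^ 2 = ‖f t‖ ^ 2 := fun t =>
    (sum_add_sum_compl S _).trans (e.sum_sq_inner_right (f t))
  have hp0 : ∀ t, 0 ≤ ∑ i ∈ S, ⟪e i, f t⟫ ^ 2 := fun t => sum_nonneg fun i _ => sq_nonneg _
  have hμS : ∀ i ∈ S, m ≤ μ i := fun i hi => by
    simpa [abs_of_pos (mem_filter.1 hi).2] using hμm i
  have hμSc : ∀ i ∈ Sᶜ, m ≤ -μ i := fun i hi => by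
    have hneg : μ i ≤ 0 := not_lt.1 fun h => mem_compl.1 hi (mem_filter.2 ⟨mem_univ i, h⟩)
    simpa [abs_of_nonpos hneg] using hμm i
  have he_neg : ∀ i, (-B) (e i) = (-μ i) • e i := fun i => by simp [he]
  obtain ⟨C, hC⟩ := exists_add_le_mul_exp_of_dichotomy (T := T) (K := K ^ 2) hm
    (fun t => (hf t).sum_inner_sq e S) (fun t => (hf t).sum_inner_sq e Sᶜ) (fun t _ => hp0 t)
    (fun t _ => by nlinarith [hpq t, hK t, norm_nonneg (f t), hp0 t])
    (fun t ht => by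
      have := e.le_sum_inner_mul_inner_apply hB he hμS (hT t ht) (f t)
      rw [← hpq t] at this
      simp only [inner_neg_right, mul_neg, sum_neg_distrib]
      linarith)
    (fun t ht => by
      have := e.le_sum_inner_mul_inner_apply (A := -A t) hB.neg he_neg hμSc
        (by rw [neg_sub_neg, norm_sub_rev]; exact hT t ht) (f t)
      rw [← hpq t] at this
      simpa only [neg_apply] using this)
  exact ⟨C, fun t ht => (hpq t).symm.trans_le (hC t ht)⟩

theorem exists_norm_le_mul_exp_of_tendsto_atTop [FiniteDimensional ℝ E]
    {A : ℝ → E →L[ℝ] E} {B : E →L[ℝ] E} (hA : Tendsto A atTop (𝓝 B))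
    (hB : (B : E →ₗ[ℝ] E).IsSymmetric) (hB_inj : Function.Injective B)
    {f : ℝ → E} (hf : ∀ t, HasDerivAt f (-(A t (f t))) t) {K : ℝ} (hK : ∀ t, ‖f t‖ ≤ K) :
    ∃ δ > 0, ∃ C, ∀ t, ‖f t‖ ≤ C * exp (-δ * t) := by
  set e := hB.eigenvectorBasis (n := Module.finrank ℝ E) rfl
  have he : ∀ i, B (e i) = hB.eigenvalues rfl i • e i := hB.apply_eigenvectorBasis rfl
  obtain ⟨m, hm, hμm⟩ := Finite.exists_pos_le_abs (a := hB.eigenvalues rfl) fun i h0 =>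
    e.orthonormal.ne_zero i (hB_inj (by rw [he, h0, zero_smul, map_zero]))
  obtain ⟨T, hT⟩ : ∃ T, ∀ t, T ≤ t → ‖A t - B‖ ≤ m / 4 := eventually_atTop.1 <|
    (tendsto_iff_norm_sub_tendsto_zero.1 hA).eventually (ge_mem_nhds (by positivity))
  obtain ⟨C, hC⟩ := e.exists_norm_sq_le_mul_exp hB he hm hμm hT hf hK
  obtain ⟨C', hC'⟩ := exists_le_mul_exp_of_le_of_forall_ge (g := fun t => ‖f t‖ ^ 2) hm.le
    (fun t => pow_le_pow_left₀ (norm_nonneg _) (hK t) 2) hC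
  refine ⟨m / 2, by positivity, √C', fun t => ?_⟩
  calc ‖f t‖ = √(‖f t‖ ^ 2) := (sqrt_sq (norm_nonneg _)).symm
    _ ≤ √(C' * exp (-m * t)) := sqrt_le_sqrt (hC' t)
    _ = √C' * exp (-(m / 2) * t) := by rw [sqrt_mul' _ (exp_pos _).le, ← exp_half]; ring_nf

end InnerProductSpace

theorem stmt_11_general {E : Type*} [NormedAddCommGroup E] [InnerProductSpace ℝ E]
    [FiniteDimensional ℝ E]
    (A : ℝ → E →L[ℝ] E)
    (Aminus Aplus : E →L[ℝ] E)
    (hA_minus : Filter.Tendsto A Filter.atBot (nhds Aminus))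
    (hA_plus : Filter.Tendsto A Filter.atTop (nhds Aplus))
    (hminus_sa : ∀ x y : E, ⟪Aminus x, y⟫ = ⟪x, Aminus y⟫)
    (hplus_sa : ∀ x y : E, ⟪Aplus x, y⟫ = ⟪x, Aplus y⟫)
    (hminus_inv : Function.Bijective Aminus)
    (hplus_inv : Function.Bijective Aplus)
    (f : ℝ → E)
    (hf_sol : ∀ t : ℝ, HasDerivAt f (-(A t (f t))) t)
    (hf_bdd : ∃ K : ℝ, ∀ t : ℝ, ‖f t‖ ≤ K) :
    ∃ C δ : ℝ, 0 < C ∧ 0 < δ ∧ ∀ t : ℝ, ‖f t‖ ≤ C * Real.exp (-δ * |t|) := by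
  obtain ⟨K, hK⟩ := hf_bdd
  obtain ⟨δ₁, hδ₁, C₁, h₁⟩ :=
    exists_norm_le_mul_exp_of_tendsto_atTop hA_plus hplus_sa hplus_inv.1 hf_sol hK
  have hf_rev : ∀ t, HasDerivAt (fun s => f (-s)) (-((-A (-t)) (f (-t)))) t := fun t => by
    simpa [Function.comp_def] using (hf_sol (-t)).scomp t (hasDerivAt_neg t)
  obtain ⟨δ₂, hδ₂, C₂, h₂⟩ := exists_norm_le_mul_exp_of_tendsto_atTop
    ((hA_minus.comp tendsto_neg_atTop_atBot).neg) (LinearMap.IsSymmetric.neg hminus_sa)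
    (neg_injective.comp hminus_inv.1) hf_rev fun t => hK (-t)
  refine ⟨max (max C₁ C₂) 1, min δ₁ δ₂, by positivity, lt_min hδ₁ hδ₂, fun t => ?_⟩
  rcases le_total 0 t with ht | ht
  · calc ‖f t‖ ≤ C₁ * exp (-δ₁ * t) := h₁ t
      _ ≤ _ := by
        rw [abs_of_nonneg ht]
        gcongr
        exacts [le_max_of_le_left (le_max_left _ _), min_le_left _ _]
  · calc ‖f t‖ ≤ C₂ * exp (-δ₂ * -t) := by simpa using h₂ (-t)
      _ ≤ _ := by
        rw [abs_of_nonpos ht]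
        gcongr
        exacts [le_max_of_le_left (le_max_right _ _), neg_nonneg.2 ht, min_le_right _ _]

/-- Let `E` be a finite-dimensional real inner product space and `A : ℝ → End(E)`
a continuous map, bounded in operator norm, converging at `-∞` and `+∞` to
self-adjoint invertible operators `A₋` and `A₊`.  Then every bounded `C¹` solution
`f : ℝ → E` of `f' + A f = 0` decays exponentially: there exist `C, δ > 0` with
`‖f t‖ ≤ C * exp (-δ * |t|)` for all `t`. -/
theorem stmt_11 {E : Type*} [NormedAddCommGroup E] [InnerProductSpace ℝ E]
    [FiniteDimensional ℝ E]
    (A : ℝ → E →L[ℝ] E) (hA_cont : Continuous A)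
    (hA_bdd : ∃ K : ℝ, ∀ t : ℝ, ‖A t‖ ≤ K)
    (Aminus Aplus : E →L[ℝ] E)
    (hA_minus : Filter.Tendsto A Filter.atBot (nhds Aminus))
    (hA_plus : Filter.Tendsto A Filter.atTop (nhds Aplus))
    (hminus_sa : ∀ x y : E, ⟪Aminus x, y⟫ = ⟪x, Aminus y⟫)
    (hplus_sa : ∀ x y : E, ⟪Aplus x, y⟫ = ⟪x, Aplus y⟫)
    (hminus_inv : Function.Bijective Aminus)
    (hplus_inv : Function.Bijective Aplus)
    (f : ℝ → E)
    (hf_sol : ∀ t : ℝ, HasDerivAt f (-(A t (f t))) t)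
    (hf_bdd : ∃ K : ℝ, ∀ t : ℝ, ‖f t‖ ≤ K) :
    ∃ C δ : ℝ, 0 < C ∧ 0 < δ ∧ ∀ t : ℝ, ‖f t‖ ≤ C * Real.exp (-δ * |t|) :=
  stmt_11_general A Aminus Aplus hA_minus hA_plus hminus_sa hplus_sa hminus_inv hplus_inv f hf_sol
    hf_bdd
end
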